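/- Let X be a càdlàg function without upward jumps with X_0 = x, and let δ : [x,∞) → [0,1) be measurable such that the ODE y' = 1 - δ(y), y(0) = x has a unique absolutely continuous solution y. If V solves the natural tax integral equation V_t = X_t - ∫_{(0,t]} δ(V̄_s) dX̄_s (with V̄_s = sup_{r≤s} V_r), then V̄_t = y(X̄_t - x) for all t ≥ 0. -/

import Mathlib

/-!
Write `M = X̄` and `W = V̄`. Because `δ ∈ [0, 1)`, the tax integral `I t = ∫_{(0,t]} δ(W) dM` grows
by at most as much as `M`, which gives the tax identity `W = M - I`, i.e.
`dW = (1 - δ(W)) dM`. Since `X` has no upward jumps `M` is continuous, hence so is `W`, and `W`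
pushes the measure `(1 - δ(W)) dM` on `(0, t]` forward to Lebesgue measure on `(x, W t]`.
Changing variables gives `∫_x^{W t} du / (1 - δ u) = M t - x`; the same computation for `y`
gives `∫_x^{y a} du / (1 - δ u) = a`. The integrand is at least `1`, so `v ↦ ∫_x^v du / (1 - δ u)`
is injective and `W t = y (M t - x)`.
-/

open MeasureTheory Set Filter

/-- Running maximum of a path on `[0, t]`. -/
noncomputable def runMax (X : ℝ → ℝ) (t : ℝ) : ℝ := sSup (X '' Set.Icc 0 t)

open Topology
open scoped ENNReal

section RunMax

variable {X : ℝ → ℝ} {r s t u C : ℝ}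

lemma le_runMax (hX : BddAbove (X '' Icc 0 t)) (hr : r ∈ Icc 0 t) : X r ≤ runMax X t :=
  le_csSup hX (mem_image_of_mem X hr)

lemma runMax_le (ht : 0 ≤ t) (h : ∀ r ∈ Icc 0 t, X r ≤ C) : runMax X t ≤ C :=
  csSup_le ⟨X 0, mem_image_of_mem X ⟨le_rfl, ht⟩⟩ (forall_mem_image.2 h)

lemma runMax_zero (X : ℝ → ℝ) : runMax X 0 = X 0 := by simp [runMax]

lemma runMax_mono (hX : BddAbove (X '' Icc 0 t)) (hs : 0 ≤ s) (hst : s ≤ t) :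
    runMax X s ≤ runMax X t :=
  runMax_le hs fun _ hr => le_runMax hX ⟨hr.1, hr.2.trans hst⟩

lemma runMax_le_max (hX : BddAbove (X '' Icc 0 s)) (hs : 0 ≤ s) (hst : s ≤ t)
    (h : ∀ r ∈ Ioc s t, X r ≤ C) : runMax X t ≤ max (runMax X s) C :=
  runMax_le (hs.trans hst) fun r hr => (le_or_gt r s).elim
    (fun hrs => le_max_of_le_left (le_runMax hX ⟨hr.1, hrs⟩))
    (fun hsr => le_max_of_le_right (h r ⟨hsr, hr.2⟩))

/-- `sSup` of a set of reals that is not bounded above is `0`. -/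
lemma runMax_eq_zero_or_le (X : ℝ → ℝ) (ht : 0 ≤ t) : runMax X t = 0 ∨ X 0 ≤ runMax X t := by
  by_cases hX : BddAbove (X '' Icc 0 t)
  · exact Or.inr (le_runMax hX ⟨le_rfl, ht⟩)
  · exact Or.inl (Real.sSup_of_not_bddAbove hX)

lemma bddAbove_image_Icc_of_rightCts_of_leftLim {a b : ℝ}
    (hr : ∀ t ∈ Icc a b, ContinuousWithinAt X (Ici t) t)
    (hl : ∀ t ∈ Ioc a b, ∃ l, Tendsto X (𝓝[<] t) (𝓝 l)) : BddAbove (X '' Icc a b) := by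
  refine isCompact_Icc.induction_on (p := fun s => BddAbove (X '' s)) (by simp)
    (fun s t hst h => h.mono (image_mono hst))
    (fun s t hs ht => by simpa only [image_union] using hs.union ht) fun u hu => ?_
  have hright : ∀ᶠ s in 𝓝[Icc a b] u, u ≤ s → X s ≤ X u + 1 :=
    eventually_nhdsWithin_of_eventually_nhds <| eventually_nhdsWithin_iff.1 <|
      (hr u hu).eventually (eventually_le_nhds (lt_add_one _))
  obtain ⟨C, hleft⟩ : ∃ C, ∀ᶠ s in 𝓝[Icc a b] u, s < u → X s ≤ C := by
    rcases hu.1.eq_or_lt with rfl | hau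
    · exact ⟨0, eventually_nhdsWithin_of_forall fun s hs hsu => absurd hs.1 hsu.not_ge⟩
    · obtain ⟨l, hl⟩ := hl u ⟨hau, hu.2⟩
      exact ⟨l + 1, eventually_nhdsWithin_of_eventually_nhds <| eventually_nhdsWithin_iff.1 <|
        hl.eventually (eventually_le_nhds (lt_add_one _))⟩
  refine ⟨{s | X s ≤ max (X u + 1) C}, ?_, max (X u + 1) C, forall_mem_image.2 fun s hs => hs⟩
  filter_upwards [hright, hleft] with s hs₁ hs₂
  rcases le_or_gt u s with hus | hsu
  · exact le_max_of_le_left (hs₁ hus)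
  · exact le_max_of_le_right (hs₂ hsu)

lemma continuousWithinAt_Ioi_runMax (hu : 0 ≤ u) (hXb : ∀ t ≥ 0, BddAbove (X '' Icc 0 t))
    (hr : ContinuousWithinAt X (Ici u) u) : ContinuousWithinAt (runMax X) (Ioi u) u := by
  refine tendsto_order.2 ⟨fun a ha => ?_, fun a ha => ?_⟩
  · filter_upwards [self_mem_nhdsWithin] with s hs
    exact ha.trans_le (runMax_mono (hXb s (hu.trans hs.le)) hu hs.le)
  · obtain ⟨c, hc, hca⟩ := exists_between ha
    have hXu : X u < c := (le_runMax (hXb u hu) ⟨hu, le_rfl⟩).trans_lt hc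
    obtain ⟨q, hq, hqX⟩ := mem_nhdsGE_iff_exists_Ico_subset.1 (hr.eventually (gt_mem_nhds hXu))
    filter_upwards [Ioo_mem_nhdsGT hq] with s hs
    refine (runMax_le_max (hXb u hu) hu hs.1.le fun r hr => ?_).trans_lt (max_lt (hc.trans hca) hca)
    exact (hqX ⟨hr.1.le, hr.2.trans_lt hs.2⟩).le

lemma continuousWithinAt_Iio_runMax {l : ℝ} (hu : 0 < u) (hXb : BddAbove (X '' Icc 0 u))
    (hl : Tendsto X (𝓝[<] u) (𝓝 l)) (hjump : X u ≤ l) :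
    ContinuousWithinAt (runMax X) (Iio u) u := by
  refine tendsto_order.2 ⟨fun a ha => ?_, fun a ha => ?_⟩
  · set ε := (runMax X u - a) / 3 with hε
    obtain ⟨p, hpu, hp⟩ := mem_nhdsLT_iff_exists_Ioo_subset.1
      (hl.eventually (Ioo_mem_nhds (sub_lt_self l (by linarith)) (lt_add_of_pos_right l
        (by linarith : 0 < ε))))
    filter_upwards [Ioo_mem_nhdsLT (max_lt hpu hu)] with s hs
    have hs0 : 0 ≤ s := (le_max_right _ _).trans hs.1.le
    have hXs : l - ε < runMax X s := (hp ⟨(le_max_left _ _).trans_lt hs.1, hs.2⟩).1.trans_le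
      (le_runMax (hXb.mono (image_mono (Icc_subset_Icc_right hs.2.le))) ⟨hs0, le_rfl⟩)
    have hXu := runMax_le_max (C := l + ε) (hXb.mono (image_mono (Icc_subset_Icc_right hs.2.le)))
      hs0 hs.2.le fun r hr => hr.2.eq_or_lt.elim (fun hru => hru ▸ hjump.trans (by linarith))
        fun hru => (hp ⟨((le_max_left _ _).trans_lt hs.1).trans hr.1, hru⟩).2.le
    rcases le_max_iff.1 hXu with h | h <;> linarith
  · filter_upwards [Ioo_mem_nhdsLT hu] with s hs
    exact (runMax_mono hXb hs.1.le hs.2.le).trans_lt ha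

lemma continuousOn_runMax (hXb : ∀ t ≥ 0, BddAbove (X '' Icc 0 t))
    (hr : ∀ t ≥ 0, ContinuousWithinAt X (Ici t) t)
    (hl : ∀ t > 0, ∃ l, Tendsto X (𝓝[<] t) (𝓝 l))
    (hjump : ∀ t > 0, ∀ l, Tendsto X (𝓝[<] t) (𝓝 l) → X t ≤ l) :
    ContinuousOn (runMax X) (Ici 0) := by
  intro u hu
  have hright := continuousWithinAt_Ioi_iff_Ici.1 (continuousWithinAt_Ioi_runMax hu hXb (hr u hu))
  rcases (mem_Ici.1 hu).eq_or_lt with rfl | hu0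
  · exact hright
  · obtain ⟨l, hl⟩ := hl u hu0
    have hleft := continuousWithinAt_Iio_iff_Iic.1
      (continuousWithinAt_Iio_runMax hu0 (hXb u hu) hl (hjump u hu0 l hl))
    exact (continuousAt_iff_continuous_left_right.2 ⟨hleft, hright⟩).continuousWithinAt

lemma runMax_sub_eq {V I : ℝ → ℝ} (ht : 0 ≤ t) (hXb : BddAbove (X '' Icc 0 t))
    (hV : ∀ r ∈ Icc 0 t, V r = X r - I r)
    (hI : ∀ r ∈ Icc 0 t, 0 ≤ I t - I r ∧ I t - I r ≤ runMax X t - runMax X r) :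
    runMax V t = runMax X t - I t := by
  have hle : ∀ r ∈ Icc 0 t, V r ≤ runMax X t - I t := fun r hr => by
    have := le_runMax (hXb.mono (image_mono (Icc_subset_Icc_right hr.2))) ⟨hr.1, le_rfl⟩
    linarith [hV r hr, (hI r hr).2]
  refine le_antisymm (runMax_le ht hle) (sub_le_iff_le_add.2 (runMax_le ht fun r hr => ?_))
  have := le_runMax ⟨_, forall_mem_image.2 hle⟩ hr
  linarith [hV r hr, (hI r hr).1]

end RunMax

lemma continuousOn_of_dist_le {f g : ℝ → ℝ} {s : Set ℝ} (hg : ContinuousOn g s)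
    (h : ∀ c ∈ s, ∀ d ∈ s, c ≤ d → dist (f c) (f d) ≤ dist (g c) (g d)) : ContinuousOn f s := by
  have h' : ∀ c ∈ s, ∀ d ∈ s, dist (f c) (f d) ≤ dist (g c) (g d) := fun c hc d hd =>
    (le_total c d).elim (h c hc d hd) fun hdc => by
      simpa only [dist_comm] using h d hd c hc hdc
  intro c hc
  rw [ContinuousWithinAt, tendsto_iff_dist_tendsto_zero]
  exact squeeze_zero' (Eventually.of_forall fun _ => dist_nonneg)
    (eventually_nhdsWithin_of_forall fun d hd => h' d hd c hc)
    (tendsto_iff_dist_tendsto_zero.1 (hg c hc))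

lemma setIntegral_Ioc_sub_setIntegral_Ioc {μ : Measure ℝ} {f : ℝ → ℝ} {a c d : ℝ}
    (hac : a ≤ c) (hcd : c ≤ d) (hf : IntegrableOn f (Ioc a d) μ) :
    ∫ s in Ioc a d, f s ∂μ - ∫ s in Ioc a c, f s ∂μ = ∫ s in Ioc c d, f s ∂μ := by
  simp only [← intervalIntegral.integral_of_le, hac, hcd, hac.trans hcd]
  have had := (intervalIntegrable_iff_integrableOn_Ioc_of_le (hac.trans hcd)).2 hf
  exact intervalIntegral.integral_interval_sub_left had
    (had.mono_set (by simp [uIcc_of_le, hac, hcd, hac.trans hcd, Icc_subset_Icc_right]))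

lemma StieltjesFunction.measureReal_Ioc (F : StieltjesFunction ℝ) {c d : ℝ} (hcd : c ≤ d) :
    F.measure.real (Ioc c d) = F d - F c := by
  rw [measureReal_def, F.measure_Ioc, ENNReal.toReal_ofReal (sub_nonneg.2 (F.mono hcd))]

lemma StieltjesFunction.setIntegral_Ioc_le_sub (F : StieltjesFunction ℝ) {φ : ℝ → ℝ} {c d : ℝ}
    (hcd : c ≤ d) (hφ : ∀ s ∈ Ioc c d, φ s ≤ 1) : ∫ s in Ioc c d, φ s ∂F.measure ≤ F d - F c := by
  by_cases hint : IntegrableOn φ (Ioc c d) F.measure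
  · calc ∫ s in Ioc c d, φ s ∂F.measure ≤ ∫ _ in Ioc c d, (1 : ℝ) ∂F.measure :=
          setIntegral_mono_on hint (integrableOn_const measure_Ioc_lt_top.ne) measurableSet_Ioc hφ
      _ = F d - F c := by rw [setIntegral_const, smul_eq_mul, mul_one, F.measureReal_Ioc hcd]
  · rw [integral_undef hint]
    exact sub_nonneg.2 (F.mono hcd)

lemma exists_preimage_Iic_inter_Ioc_eq_Ioc {W : ℝ → ℝ} {a b v : ℝ} (hab : a ≤ b)
    (hWm : MonotoneOn W (Icc a b)) (hWc : ContinuousOn W (Icc a b)) (hv : W a ≤ v) :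
    ∃ c ∈ Icc a b, W ⁻¹' Iic v ∩ Ioc a b = Ioc a c ∧ W c = min v (W b) := by
  set S := Icc a b ∩ W ⁻¹' Iic v
  have haS : a ∈ S := ⟨left_mem_Icc.2 hab, hv⟩
  have hSb : BddAbove S := ⟨b, fun s hs => hs.1.2⟩
  have hcS : sSup S ∈ S :=
    (hWc.preimage_isClosed_of_isClosed isClosed_Icc isClosed_Iic).csSup_mem ⟨a, haS⟩ hSb
  refine ⟨sSup S, hcS.1, ?_,
    le_antisymm (le_min hcS.2 (hWm hcS.1 (right_mem_Icc.2 hab) hcS.1.2)) ?_⟩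
  · ext s
    refine ⟨fun ⟨hsv, hs⟩ => ⟨hs.1, le_csSup hSb ⟨Ioc_subset_Icc_self hs, hsv⟩⟩, fun hs => ?_⟩
    have hsb := hs.2.trans hcS.1.2
    exact ⟨(hWm ⟨hs.1.le, hsb⟩ hcS.1 hs.2).trans hcS.2, hs.1, hsb⟩
  · obtain ⟨c, hc, hWc⟩ := intermediate_value_Icc hab hWc
      ⟨le_min hv (hWm (left_mem_Icc.2 hab) (right_mem_Icc.2 hab) hab), min_le_right _ _⟩
    rw [← hWc]
    exact hWm hc hcS.1 (le_csSup hSb ⟨hc, (hWc.trans_le (min_le_left _ _) :)⟩)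

lemma map_eq_volume_restrict_Ioc {ρ : Measure ℝ} {W : ℝ → ℝ} {a b : ℝ} (hab : a ≤ b)
    (hWm : MonotoneOn W (Icc a b)) (hWc : ContinuousOn W (Icc a b)) (hWae : AEMeasurable W ρ)
    (hρ : ρ (Ioc a b)ᶜ = 0) (hρW : ∀ c ∈ Icc a b, ρ (Ioc a c) = ENNReal.ofReal (W c - W a)) :
    ρ.map W = volume.restrict (Ioc (W a) (W b)) := by
  have hρmap : ∀ v, ρ.map W (Iic v) = ρ (W ⁻¹' Iic v ∩ Ioc a b) := fun v => by
    rw [Measure.map_apply_of_aemeasurable hWae measurableSet_Iic, measure_inter_conull hρ]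
  refine (Measure.ext_of_Iic _ _ fun v => ?_).symm
  rw [hρmap, Measure.restrict_apply measurableSet_Iic, inter_comm, Ioc_inter_Iic]
  rcases lt_or_ge v (W a) with hv | hv
  · have hempty : W ⁻¹' Iic v ∩ Ioc a b = ∅ := eq_empty_of_forall_notMem fun s ⟨hsv, hs⟩ =>
      hv.not_ge ((hWm (left_mem_Icc.2 hab) (Ioc_subset_Icc_self hs) hs.1.le).trans hsv)
    rw [hempty, measure_empty, Ioc_eq_empty ((min_le_right _ _).trans_lt hv).not_gt, measure_empty]
  · obtain ⟨c, hc, hpre, hWc⟩ := exists_preimage_Iic_inter_Ioc_eq_Ioc hab hWm hWc hv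
    rw [hpre, hρW c hc, hWc, min_comm, Real.volume_Ioc]

theorem StieltjesFunction.lintegral_inv_eq_measure_Ioc (F : StieltjesFunction ℝ) {h W : ℝ → ℝ}
    {a b : ℝ} (hab : a ≤ b) (hF : ContinuousOn F (Icc a b)) (hh : Measurable h)
    (hh01 : ∀ s ∈ Ioc a b, 0 < h (W s) ∧ h (W s) ≤ 1)
    (hint : IntegrableOn (fun s => h (W s)) (Ioc a b) F.measure)
    (hW : ∀ c ∈ Icc a b, W c = W a + ∫ s in Ioc a c, h (W s) ∂F.measure) :
    ∫⁻ u in Ioc (W a) (W b), ENNReal.ofReal (h u)⁻¹ = F.measure (Ioc a b) := by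
  have hincr : ∀ c ∈ Icc a b, ∀ d ∈ Icc a b, c ≤ d → 0 ≤ W d - W c ∧ W d - W c ≤ F d - F c := by
    intro c hc d hd hcd
    rw [hW d hd, hW c hc, add_sub_add_left_eq_sub, setIntegral_Ioc_sub_setIntegral_Ioc hc.1 hcd
      (hint.mono_set (Ioc_subset_Ioc_right hd.2))]
    have hsub : Ioc c d ⊆ Ioc a b := Ioc_subset_Ioc hc.1 hd.2
    exact ⟨setIntegral_nonneg measurableSet_Ioc fun s hs => (hh01 s (hsub hs)).1.le,
      F.setIntegral_Ioc_le_sub hcd fun s hs => (hh01 s (hsub hs)).2⟩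
  have hWm : MonotoneOn W (Icc a b) := fun c hc d hd hcd => sub_nonneg.1 (hincr c hc d hd hcd).1
  have hWc : ContinuousOn W (Icc a b) := continuousOn_of_dist_le hF fun c hc d hd hcd => by
    rw [Real.dist_eq, Real.dist_eq, abs_sub_comm, abs_of_nonneg (hincr c hc d hd hcd).1,
      abs_sub_comm, abs_of_nonneg (sub_nonneg.2 (F.mono hcd))]
    exact (hincr c hc d hd hcd).2
  set μ := F.measure.restrict (Ioc a b)
  have hWae : AEMeasurable W μ :=
    aemeasurable_restrict_of_monotoneOn measurableSet_Ioc (hWm.mono Ioc_subset_Icc_self)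
  have hdens : AEMeasurable (fun s => ENNReal.ofReal (h (W s))) μ :=
    ENNReal.measurable_ofReal.comp_aemeasurable (hh.comp_aemeasurable hWae)
  set ρ := μ.withDensity fun s => ENNReal.ofReal (h (W s))
  have hρ : ρ (Ioc a b)ᶜ = 0 := withDensity_absolutelyContinuous _ _ (by
    rw [Measure.restrict_apply measurableSet_Ioc.compl, compl_inter_self, measure_empty])
  have hρW : ∀ c ∈ Icc a b, ρ (Ioc a c) = ENNReal.ofReal (W c - W a) := fun c hc => by
    rw [withDensity_apply _ measurableSet_Ioc, Measure.restrict_restrict measurableSet_Ioc,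
      inter_eq_left.2 (Ioc_subset_Ioc_right hc.2), ← ofReal_integral_eq_lintegral_ofReal
        (hint.mono_set (Ioc_subset_Ioc_right hc.2))
        ((ae_restrict_iff' measurableSet_Ioc).2 (Eventually.of_forall fun s hs =>
          (hh01 s (Ioc_subset_Ioc_right hc.2 hs)).1.le)),
      hW c hc, add_sub_cancel_left]
  have hg : Measurable fun u => ENNReal.ofReal (h u)⁻¹ := ENNReal.measurable_ofReal.comp hh.inv
  calc ∫⁻ u in Ioc (W a) (W b), ENNReal.ofReal (h u)⁻¹
      = ∫⁻ u, ENNReal.ofReal (h u)⁻¹ ∂ρ.map W := by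
        rw [map_eq_volume_restrict_Ioc hab hWm hWc
          (hWae.mono_ac (withDensity_absolutelyContinuous _ _)) hρ hρW]
    _ = ∫⁻ s, ENNReal.ofReal (h (W s))⁻¹ ∂ρ :=
        lintegral_map' hg.aemeasurable (hWae.mono_ac (withDensity_absolutelyContinuous _ _))
    _ = ∫⁻ s in Ioc a b, ENNReal.ofReal (h (W s)) * ENNReal.ofReal (h (W s))⁻¹ ∂F.measure :=
        lintegral_withDensity_eq_lintegral_mul₀ hdens (hg.comp_aemeasurable hWae)
    _ = ∫⁻ _ in Ioc a b, 1 ∂F.measure := setLIntegral_congr_fun measurableSet_Ioc fun s hs => by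
        rw [← ENNReal.ofReal_mul (hh01 s hs).1.le, mul_inv_cancel₀ (hh01 s hs).1.ne',
          ENNReal.ofReal_one]
    _ = F.measure (Ioc a b) := setLIntegral_one _

/-- Were the integrand not integrable on `(0, c]`, the interval integral would be the junk
value `0` and `y c = x`; so past the integrability horizon the integrand is constant, and the
horizon cannot be finite. -/
lemma integrableOn_Ioc_of_eq_add_integral {φ y : ℝ → ℝ} {x C : ℝ}
    (hC : ∀ t > 0, ‖φ (y t)‖ ≤ C) (hy : ∀ t ≥ 0, y t = x + ∫ s in (0 : ℝ)..t, φ (y s))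
    (b : ℝ) : IntegrableOn (fun s => φ (y s)) (Ioc 0 b) := by
  set S := {c | IntegrableOn (fun s => φ (y s)) (Ioc 0 c)}
  by_contra hbS
  have hdown : ∀ c ∈ S, ∀ d ≤ c, d ∈ S := fun c hc d hdc => hc.mono_set (Ioc_subset_Ioc_right hdc)
  have hSb : BddAbove S := ⟨b, fun c hc => not_lt.1 fun hbc => hbS (hdown c hc b hbc.le)⟩
  have h0S : (0 : ℝ) ∈ S := by simp [S]
  have hT : 0 ≤ sSup S := le_csSup hSb h0S
  have hTS : sSup S ∈ S := by
    refine integrableOn_Ioc_of_intervalIntegral_norm_bounded_right (l := atTop) (I := C * sSup S)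
      (b := fun n : ℕ => sSup S - 1 / (n + 1)) (fun n => ?_) ?_ (Eventually.of_forall fun n => ?_)
    · obtain ⟨c, hcS, hc⟩ :=
        exists_lt_of_lt_csSup ⟨0, h0S⟩ (sub_lt_self (sSup S) Nat.one_div_pos_of_nat)
      exact hdown c hcS _ hc.le
    · simpa using tendsto_one_div_add_atTop_nhds_zero_nat.const_sub (sSup S)
    · have hC0 : 0 ≤ C := (norm_nonneg _).trans (hC 1 one_pos)
      refine (Real.le_norm_self _).trans ((norm_setIntegral_le_of_norm_le_const measure_Ioc_lt_top
        fun s hs => (norm_norm (φ (y s))).trans_le (hC s hs.1)).trans ?_)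
      have hn : (0 : ℝ) < 1 / (n + 1) := Nat.one_div_pos_of_nat
      rw [Real.volume_real_Ioc]
      exact mul_le_mul_of_nonneg_left (max_le (by linarith) hT) hC0
  have hconst : ∀ s ∈ Ioc (sSup S) (sSup S + 1), φ (y s) = φ x := fun s hs => by
    have hsS : s ∉ S := fun h => hs.1.not_ge (le_csSup hSb h)
    rw [hy s (hT.trans hs.1.le), intervalIntegral.integral_undef, add_zero]
    rwa [intervalIntegrable_iff_integrableOn_Ioc_of_le (hT.trans hs.1.le)]
  have : sSup S + 1 ∈ S := by
    show IntegrableOn (fun s => φ (y s)) (Ioc 0 (sSup S + 1))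
    rw [← Ioc_union_Ioc_eq_Ioc hT (le_add_of_nonneg_right zero_le_one)]
    exact hTS.union ((integrableOn_const measure_Ioc_lt_top.ne).congr_fun
      (fun s hs => (hconst s hs).symm) measurableSet_Ioc)
  exact (lt_add_one (sSup S)).not_ge (le_csSup hSb this)

lemma eq_of_setLIntegral_Ioc_eq {g : ℝ → ℝ≥0∞} {x v w : ℝ} (hg : ∀ u > x, 1 ≤ g u)
    (hv : x ≤ v) (hw : x ≤ w) (hfin : ∫⁻ u in Ioc x v, g u ≠ ∞)
    (h : ∫⁻ u in Ioc x v, g u = ∫⁻ u in Ioc x w, g u) : v = w := by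
  wlog hvw : v ≤ w generalizing v w
  · exact (this hw hv (h ▸ hfin) h.symm (le_of_not_ge hvw)).symm
  refine hvw.antisymm (not_lt.1 fun hvw' => ?_)
  have hpos : 0 < ∫⁻ u in Ioc v w, g u :=
    calc 0 < volume (Ioc v w) := by simpa using hvw'
      _ = ∫⁻ _ in Ioc v w, 1 := (setLIntegral_one _).symm
      _ ≤ ∫⁻ u in Ioc v w, g u := setLIntegral_mono' measurableSet_Ioc fun u hu =>
          hg u (hv.trans_lt hu.1)
  rw [← Ioc_union_Ioc_eq_Ioc hv hvw, lintegral_union measurableSet_Ioc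
    (Ioc_disjoint_Ioc_of_le le_rfl)] at h
  exact (ENNReal.lt_add_right hfin hpos.ne').ne h

lemma lintegral_inv_eq_of_ode {δ y : ℝ → ℝ} {x a : ℝ} (hδm : Measurable δ)
    (hδ : ∀ z ≥ x, 0 ≤ δ z ∧ δ z < 1) (hyx : ∀ t ≥ 0, x ≤ y t)
    (hy : ∀ t ≥ 0, y t = x + ∫ s in (0 : ℝ)..t, (1 - δ (y s))) (ha : 0 ≤ a) :
    ∫⁻ u in Ioc x (y a), ENNReal.ofReal (1 - δ u)⁻¹ = ENNReal.ofReal a := by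
  have hy0 : y 0 = x := by simpa using hy 0 le_rfl
  have hδy : ∀ s > 0, 0 < 1 - δ (y s) ∧ 1 - δ (y s) ≤ 1 := fun s hs => by
    have := hδ _ (hyx s hs.le)
    constructor <;> linarith
  have hint := integrableOn_Ioc_of_eq_add_integral (φ := fun z => 1 - δ z) (C := 1)
    (fun t ht => (Real.norm_of_nonneg (hδy t ht).1.le).trans_le (hδy t ht).2) hy a
  rw [Real.volume_eq_stieltjes_id] at hint
  have := StieltjesFunction.id.lintegral_inv_eq_measure_Ioc (h := fun z => 1 - δ z) ha
    continuous_id.continuousOn (measurable_const.sub hδm) (fun s hs => hδy s hs.1) hint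
    fun c hc => by
      rw [← Real.volume_eq_stieltjes_id, ← intervalIntegral.integral_of_le hc.1, hy0]
      exact hy c hc.1
  rwa [hy0, StieltjesFunction.measure_Ioc, StieltjesFunction.id_apply, StieltjesFunction.id_apply,
    id, id, sub_zero] at this

lemma bddAbove_image_Icc_of_eq_sub_setIntegral {X V φ : ℝ → ℝ} {μ : Measure ℝ}
    [IsFiniteMeasureOnCompacts μ] {T K : ℝ} (hXb : BddAbove (X '' Icc 0 T))
    (hV : ∀ r ∈ Icc 0 T, V r = X r - ∫ s in Ioc 0 r, φ s ∂μ) (hφ : ∀ s ∈ Ioc 0 T, ‖φ s‖ ≤ K) :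
    BddAbove (V '' Icc 0 T) := by
  obtain ⟨C, hC⟩ := hXb
  refine ⟨C + |K| * μ.real (Ioc 0 T), forall_mem_image.2 fun r hr => ?_⟩
  have hsub : Ioc 0 r ⊆ Ioc 0 T := Ioc_subset_Ioc_right hr.2
  have hI := norm_setIntegral_le_of_norm_le_const (μ := μ) measure_Ioc_lt_top
    fun s hs => hφ s (hsub hs)
  rw [Real.norm_eq_abs] at hI
  have hK : K * μ.real (Ioc 0 r) ≤ |K| * μ.real (Ioc 0 T) :=
    (mul_le_mul_of_nonneg_right (le_abs_self K) measureReal_nonneg).trans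
      (mul_le_mul_of_nonneg_left (measureReal_mono hsub measure_Ioc_lt_top.ne) (abs_nonneg K))
  rw [hV r hr]
  linarith [hC (mem_image_of_mem X hr), neg_abs_le (∫ s in Ioc 0 r, φ s ∂μ)]

lemma bddAbove_image_Icc_of_natural_tax {x : ℝ} {X V δ : ℝ → ℝ} {F : StieltjesFunction ℝ}
    (hX0 : X 0 = x) (hXb : ∀ t ≥ 0, BddAbove (X '' Icc 0 t)) (hδ : ∀ z ≥ x, 0 ≤ δ z ∧ δ z < 1)
    (hV : ∀ t ≥ 0, V t = X t - ∫ s in Ioc 0 t, δ (runMax V s) ∂F.measure) {T : ℝ} (hT : 0 ≤ T) :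
    BddAbove (V '' Icc 0 T) := by
  have hV0 : V 0 = x := by simpa [hX0] using hV 0 le_rfl
  refine bddAbove_image_Icc_of_eq_sub_setIntegral (K := max 1 ‖δ 0‖) (hXb T hT)
    (fun r hr => hV r hr.1) fun s hs => ?_
  rcases runMax_eq_zero_or_le V hs.1.le with h | h
  · rw [h]
    exact le_max_right _ _
  · have := hδ _ (hV0 ▸ h)
    rw [Real.norm_of_nonneg this.1]
    exact le_max_of_le_left this.2.le

lemma le_runMax_of_natural_tax {x : ℝ} {X V δ : ℝ → ℝ} {F : StieltjesFunction ℝ}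
    (hX0 : X 0 = x) (hXb : ∀ t ≥ 0, BddAbove (X '' Icc 0 t)) (hδ : ∀ z ≥ x, 0 ≤ δ z ∧ δ z < 1)
    (hV : ∀ t ≥ 0, V t = X t - ∫ s in Ioc 0 t, δ (runMax V s) ∂F.measure) {t : ℝ} (ht : 0 ≤ t) :
    x ≤ runMax V t := by
  have hV0 : V 0 = x := by simpa [hX0] using hV 0 le_rfl
  exact hV0 ▸ le_runMax (bddAbove_image_Icc_of_natural_tax hX0 hXb hδ hV ht) ⟨le_rfl, ht⟩

theorem lintegral_inv_eq_of_natural_tax {x : ℝ} {X V δ : ℝ → ℝ} {F : StieltjesFunction ℝ}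
    (hX0 : X 0 = x) (hXb : ∀ t ≥ 0, BddAbove (X '' Icc 0 t)) (hF : ∀ t ≥ 0, F t = runMax X t)
    (hFc : ContinuousOn F (Ici 0)) (hδm : Measurable δ) (hδ : ∀ z ≥ x, 0 ≤ δ z ∧ δ z < 1)
    (hV : ∀ t ≥ 0, V t = X t - ∫ s in Ioc 0 t, δ (runMax V s) ∂F.measure) {t : ℝ} (ht : 0 ≤ t) :
    ∫⁻ u in Ioc x (runMax V t), ENNReal.ofReal (1 - δ u)⁻¹ = ENNReal.ofReal (runMax X t - x) := by
  have hV0 : V 0 = x := by simpa [hX0] using hV 0 le_rfl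
  have hVb := fun T (hT : 0 ≤ T) => bddAbove_image_Icc_of_natural_tax hX0 hXb hδ hV hT
  have hδW : ∀ s ≥ 0, 0 ≤ δ (runMax V s) ∧ δ (runMax V s) < 1 := fun s hs =>
    hδ _ (le_runMax_of_natural_tax hX0 hXb hδ hV hs)
  have hint : ∀ T, IntegrableOn (fun s => δ (runMax V s)) (Ioc 0 T) F.measure := fun T =>
    IntegrableOn.of_bound measure_Ioc_lt_top (hδm.comp_aemeasurable
      (aemeasurable_restrict_of_monotoneOn measurableSet_Ioc fun s hs r hr hsr =>
        runMax_mono (hVb r hr.1.le) hs.1.le hsr)).aestronglyMeasurable 1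
      ((ae_restrict_iff' measurableSet_Ioc).2 (Eventually.of_forall fun s hs => by
        rw [Real.norm_of_nonneg (hδW s hs.1.le).1]
        exact (hδW s hs.1.le).2.le))
  have htax : ∀ T ≥ 0,
      runMax V T = runMax X T - ∫ s in Ioc 0 T, δ (runMax V s) ∂F.measure := fun T hT =>
    runMax_sub_eq hT (hXb T hT) (fun r hr => hV r hr.1) fun r hr => by
      rw [setIntegral_Ioc_sub_setIntegral_Ioc hr.1 hr.2 (hint T), ← hF T hT, ← hF r hr.1]
      exact ⟨setIntegral_nonneg measurableSet_Ioc fun s hs => (hδW s (hr.1.trans hs.1.le)).1,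
        F.setIntegral_Ioc_le_sub hr.2 fun s hs => (hδW s (hr.1.trans hs.1.le)).2.le⟩
  have hF0 : F 0 = x := by rw [hF 0 le_rfl, runMax_zero, hX0]
  have hW0 : runMax V 0 = x := by rw [runMax_zero, hV0]
  have := F.lintegral_inv_eq_measure_Ioc (h := fun z => 1 - δ z) ht (hFc.mono Icc_subset_Ici_self)
    (measurable_const.sub hδm) (fun s hs => ⟨by linarith [(hδW s hs.1.le).2],
      by linarith [(hδW s hs.1.le).1]⟩)
    ((integrableOn_const measure_Ioc_lt_top.ne).sub (hint t)) fun c hc => by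
      rw [integral_sub (μ := F.measure.restrict (Ioc 0 c)) (f := fun _ => (1 : ℝ))
          (integrableOn_const measure_Ioc_lt_top.ne) (hint c), setIntegral_const,
        smul_eq_mul, mul_one, F.measureReal_Ioc hc.1, htax c hc.1, hF c hc.1, hF0, hW0]
      ring
  rwa [hW0, F.measure_Ioc, hF t ht, hF0] at this

theorem natural_tax_running_max_general
    (x : ℝ) (X : ℝ → ℝ)
    (hX0 : X 0 = x)
    (hrc : ∀ t ≥ (0:ℝ), ContinuousWithinAt X (Set.Ici t) t)
    (hll : ∀ t > (0:ℝ), ∃ l : ℝ, Tendsto X (nhdsWithin t (Set.Iio t)) (nhds l))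
    (hnuj : ∀ t > (0:ℝ), ∀ l : ℝ,
      Tendsto X (nhdsWithin t (Set.Iio t)) (nhds l) → X t ≤ l)
    (F : StieltjesFunction ℝ) (hF : ∀ t ≥ (0:ℝ), F t = runMax X t)
    (δ : ℝ → ℝ) (hδmeas : Measurable δ)
    (hδ : ∀ z ≥ x, 0 ≤ δ z ∧ δ z < 1)
    -- y is the unique absolutely continuous solution of y' = 1 - δ(y), y 0 = x
    -- (solutions stated in equivalent integral form):
    (y : ℝ → ℝ)
    (hyrange : ∀ t ≥ (0:ℝ), x ≤ y t)
    (hy : ∀ t ≥ (0:ℝ), y t = x + ∫ s in (0:ℝ)..t, (1 - δ (y s)))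
    -- V solves the natural tax integral equation:
    (V : ℝ → ℝ)
    (hV : ∀ t ≥ (0:ℝ), V t = X t - ∫ s in Set.Ioc 0 t, δ (runMax V s) ∂F.measure) :
    ∀ t ≥ (0:ℝ), runMax V t = y (runMax X t - x) := by
  intro t ht
  have hXb : ∀ T ≥ (0:ℝ), BddAbove (X '' Icc 0 T) := fun _ _ =>
    bddAbove_image_Icc_of_rightCts_of_leftLim (fun s hs => hrc s hs.1) fun s hs => hll s hs.1
  have hFc : ContinuousOn F (Ici 0) :=
    (continuousOn_runMax hXb hrc hll hnuj).congr fun s hs => hF s hs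
  have hxM : x ≤ runMax X t := hX0 ▸ le_runMax (hXb t ht) ⟨le_rfl, ht⟩
  have hW := lintegral_inv_eq_of_natural_tax hX0 hXb hF hFc hδmeas hδ hV ht
  have hY := lintegral_inv_eq_of_ode hδmeas hδ hyrange hy (sub_nonneg.2 hxM)
  refine eq_of_setLIntegral_Ioc_eq (fun u hu => ?_) (le_runMax_of_natural_tax hX0 hXb hδ hV ht)
    (hyrange _ (sub_nonneg.2 hxM)) (hW ▸ ENNReal.ofReal_ne_top) (hW.trans hY.symm)
  have := hδ u hu.le
  exact ENNReal.one_le_ofReal.2 ((one_le_inv₀ (by linarith)).2 (by linarith))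

theorem natural_tax_running_max
    (x : ℝ) (X : ℝ → ℝ)
    (hX0 : X 0 = x)
    (hrc : ∀ t ≥ (0:ℝ), ContinuousWithinAt X (Set.Ici t) t)
    (hll : ∀ t > (0:ℝ), ∃ l : ℝ, Tendsto X (nhdsWithin t (Set.Iio t)) (nhds l))
    (hnuj : ∀ t > (0:ℝ), ∀ l : ℝ,
      Tendsto X (nhdsWithin t (Set.Iio t)) (nhds l) → X t ≤ l)
    (F : StieltjesFunction ℝ) (hF : ∀ t ≥ (0:ℝ), F t = runMax X t)
    (δ : ℝ → ℝ) (hδmeas : Measurable δ)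
    (hδ : ∀ z ≥ x, 0 ≤ δ z ∧ δ z < 1)
    -- y is the unique absolutely continuous solution of y' = 1 - δ(y), y 0 = x
    -- (solutions stated in equivalent integral form):
    (y : ℝ → ℝ)
    (hyrange : ∀ t ≥ (0:ℝ), x ≤ y t)
    (hy : ∀ t ≥ (0:ℝ), y t = x + ∫ s in (0:ℝ)..t, (1 - δ (y s)))
    (hyuniq : ∀ z : ℝ → ℝ, (∀ t ≥ (0:ℝ), x ≤ z t) →
      (∀ t ≥ (0:ℝ), z t = x + ∫ s in (0:ℝ)..t, (1 - δ (z s))) →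
      ∀ t ≥ (0:ℝ), z t = y t)
    -- V solves the natural tax integral equation:
    (V : ℝ → ℝ)
    (hV : ∀ t ≥ (0:ℝ), V t = X t - ∫ s in Set.Ioc 0 t, δ (runMax V s) ∂F.measure) :
    ∀ t ≥ (0:ℝ), runMax V t = y (runMax X t - x) :=
  natural_tax_running_max_general x X hX0 hrc hll hnuj F hF δ hδmeas hδ y hyrange hy V hV
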